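/- For Δ = 0, the Bethe vectors indexed by the (L choose N) distinct N-element subsets {k_1 < ... < k_N} ⊂ {0,...,L-1}, with components u(ξ, x) = det(ξ_j^{x_i})_{i,j} where ξ_j = φ e^{2πi k_j/L}, form a linearly independent set in ℂ^{𝒳}, where 𝒳 is the set of strictly increasing N-tuples in {0,...,L-1}. -/

import Mathlib

open Finset

/-- The `Δ = 0` Bethe roots associated to `k_1 < … < k_N` in `{0,…,L-1}`:
`ξ_j = φ e^{2πi k_j/L}` with `φ = e^{πi/L}` if `N` is even and `φ = 1` if `N` is odd. -/
noncomputable def betheRoots0 (L N : ℕ) (k : Fin N → Fin L) : Fin N → ℂ := fun j =>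
  (if Even N then Complex.exp ((Real.pi : ℂ) * Complex.I / (L : ℂ)) else 1) *
    Complex.exp (2 * (Real.pi : ℂ) * Complex.I * ((k j : ℕ) : ℂ) / (L : ℂ))

namespace Stmt6Aux

lemma betheRoots0_ne_zero (L N : ℕ) (k : Fin N → Fin L) (j : Fin N) :
    betheRoots0 L N k j ≠ 0 := by
  unfold betheRoots0
  apply mul_ne_zero
  · split_ifs
    · exact Complex.exp_ne_zero _
    · exact one_ne_zero
  · exact Complex.exp_ne_zero _

lemma ratio (L N : ℕ) (k k' : Fin N → Fin L) (j j' : Fin N) :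
    betheRoots0 L N k j * (betheRoots0 L N k' j')⁻¹ =
      Complex.exp (2 * (Real.pi : ℂ) * Complex.I *
        (((((k j : ℕ) : ℤ) - ((k' j' : ℕ) : ℤ)) : ℤ) : ℂ) / (L : ℂ)) := by
  unfold betheRoots0
  set φ := (if Even N then Complex.exp ((Real.pi : ℂ) * Complex.I / (L : ℂ)) else 1) with hφdef
  have hφ : φ ≠ 0 := by
    rw [hφdef]; split_ifs
    · exact Complex.exp_ne_zero _
    · exact one_ne_zero
  rw [mul_inv, ← Complex.exp_neg]
  have h1 : φ * Complex.exp (2 * (Real.pi : ℂ) * Complex.I * ((k j : ℕ) : ℂ) / (L : ℂ)) *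
      (φ⁻¹ * Complex.exp (-(2 * (Real.pi : ℂ) * Complex.I * ((k' j' : ℕ) : ℂ) / (L : ℂ)))) =
      Complex.exp ((2 * (Real.pi : ℂ) * Complex.I * ((k j : ℕ) : ℂ) / (L : ℂ)) +
        -(2 * (Real.pi : ℂ) * Complex.I * ((k' j' : ℕ) : ℂ) / (L : ℂ))) := by
    rw [Complex.exp_add]
    field_simp
  rw [h1]
  congr 1
  push_cast
  ring

lemma orth (L N : ℕ) (hL : 0 < L) (k k' : Fin N → Fin L) (j j' : Fin N) :
    ∑ t : Fin L, betheRoots0 L N k j ^ (t : ℕ) * (betheRoots0 L N k' j' ^ (t : ℕ))⁻¹ =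
      if k j = k' j' then (L : ℂ) else 0 := by
  set r := betheRoots0 L N k j * (betheRoots0 L N k' j')⁻¹ with hr
  have hterm : ∀ t : ℕ, betheRoots0 L N k j ^ t * (betheRoots0 L N k' j' ^ t)⁻¹ = r ^ t := by
    intro t; rw [hr, mul_pow, inv_pow]
  simp_rw [hterm]
  set m : ℤ := ((k j : ℕ) : ℤ) - ((k' j' : ℕ) : ℤ) with hm
  have hrexp : r = Complex.exp (2 * (Real.pi : ℂ) * Complex.I * (m : ℂ) / (L : ℂ)) :=
    ratio L N k k' j j'
  have hL0 : (L : ℂ) ≠ 0 := Nat.cast_ne_zero.2 hL.ne'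
  by_cases h : k j = k' j'
  · have hm0 : m = 0 := by rw [hm, h]; ring
    have hr1 : r = 1 := by rw [hrexp, hm0]; simp
    rw [if_pos h]
    simp [hr1, Finset.card_univ]
  · rw [if_neg h]
    have hmne : m ≠ 0 := by
      intro h0
      apply h
      have : ((k j : ℕ) : ℤ) = ((k' j' : ℕ) : ℤ) := by omega
      exact Fin.ext (by exact_mod_cast this)
    have hr1 : r ≠ 1 := by
      rw [hrexp]
      intro h1
      rw [Complex.exp_eq_one_iff] at h1
      obtain ⟨n, hn⟩ := h1
      have h2 : (2 * (Real.pi : ℂ) * Complex.I) ≠ 0 := by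
        simp [Real.pi_ne_zero, Complex.I_ne_zero]
      have h3 : (m : ℂ) / (L : ℂ) * (2 * (Real.pi : ℂ) * Complex.I) =
          (n : ℂ) * (2 * (Real.pi : ℂ) * Complex.I) := by
        rw [← hn]; ring
      have h4 := mul_right_cancel₀ h2 h3
      rw [div_eq_iff hL0] at h4
      have h5 : m = n * L := by exact_mod_cast h4
      have hb1 : -(L : ℤ) < m := by
        have := (k' j').isLt
        omega
      have hb2 : m < (L : ℤ) := by
        have := (k j).isLt
        omega
      rcases lt_trichotomy n 0 with hn0 | hn0 | hn0
      · have : m ≤ -(L : ℤ) := by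
          rw [h5]
          have : n * (L : ℤ) ≤ (-1) * (L : ℤ) :=
            mul_le_mul_of_nonneg_right (by omega) (by positivity)
          omega
        omega
      · exact hmne (by rw [h5, hn0, zero_mul])
      · have : (L : ℤ) ≤ m := by
          rw [h5]
          have : (1 : ℤ) * (L : ℤ) ≤ n * (L : ℤ) :=
            mul_le_mul_of_nonneg_right (by omega) (by positivity)
          omega
        omega
    have hrL : r ^ L = 1 := by
      rw [hrexp, ← Complex.exp_nat_mul]
      have : (L : ℂ) * (2 * (Real.pi : ℂ) * Complex.I * (m : ℂ) / (L : ℂ)) =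
          (m : ℂ) * (2 * (Real.pi : ℂ) * Complex.I) := by
        field_simp
      rw [this, Complex.exp_int_mul_two_pi_mul_I]
    rw [Fin.sum_univ_eq_sum_range (fun t => r ^ t) L, geom_sum_eq hr1, hrL]
    simp

lemma bigsum (L N : ℕ) (hL : 0 < L) {k k' : Fin N → Fin L}
    (hk : StrictMono k) (hk' : StrictMono k') :
    ∑ y : Fin N → Fin L,
      (Matrix.det (Matrix.of fun i j : Fin N => betheRoots0 L N k j ^ ((y i : ℕ)))) *
        (Matrix.det (Matrix.of fun i j : Fin N => (betheRoots0 L N k' j ^ ((y i : ℕ)))⁻¹)) =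
      if k = k' then ((N.factorial : ℕ) : ℂ) * (L : ℂ) ^ N else 0 := by
  classical
  have main : ∀ σ τ : Equiv.Perm (Fin N),
      ∑ y : Fin N → Fin L, ((∏ i, betheRoots0 L N k i ^ ((y (σ i) : ℕ))) *
        ∏ i, (betheRoots0 L N k' i ^ ((y (τ i) : ℕ)))⁻¹) =
      ∏ i, (if k (σ⁻¹ i) = k' (τ⁻¹ i) then (L : ℂ) else 0) := by
    intro σ τ
    have hre : ∀ y : Fin N → Fin L,
        (∏ i, betheRoots0 L N k i ^ ((y (σ i) : ℕ))) *
          ∏ i, (betheRoots0 L N k' i ^ ((y (τ i) : ℕ)))⁻¹ =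
        ∏ i, (betheRoots0 L N k (σ⁻¹ i) ^ ((y i : ℕ)) *
          (betheRoots0 L N k' (τ⁻¹ i) ^ ((y i : ℕ)))⁻¹) := by
      intro y
      rw [Finset.prod_mul_distrib]
      congr 1
      · have := Equiv.prod_comp σ (fun i => betheRoots0 L N k (σ⁻¹ i) ^ ((y i : ℕ)))
        simpa using this
      · have := Equiv.prod_comp τ (fun i => (betheRoots0 L N k' (τ⁻¹ i) ^ ((y i : ℕ)))⁻¹)
        simpa using this
    simp_rw [hre]
    rw [← Fintype.piFinset_univ, Finset.sum_prod_piFinset Finset.univ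
      (fun i t => betheRoots0 L N k (σ⁻¹ i) ^ ((t : Fin L) : ℕ) *
        (betheRoots0 L N k' (τ⁻¹ i) ^ ((t : Fin L) : ℕ))⁻¹)]
    exact Finset.prod_congr rfl fun i _ => orth L N hL k k' (σ⁻¹ i) (τ⁻¹ i)
  simp_rw [Matrix.det_apply', Matrix.of_apply, Finset.sum_mul_sum]
  rw [Finset.sum_comm]
  conv_lhs => enter [2, σ]; rw [Finset.sum_comm]
  have hstep : ∀ σ τ : Equiv.Perm (Fin N),
      ∑ y : Fin N → Fin L,
        (((Equiv.Perm.sign σ : ℤ) : ℂ) * ∏ i, betheRoots0 L N k i ^ ((y (σ i) : ℕ))) *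
          (((Equiv.Perm.sign τ : ℤ) : ℂ) * ∏ i, (betheRoots0 L N k' i ^ ((y (τ i) : ℕ)))⁻¹) =
      (((Equiv.Perm.sign σ : ℤ) : ℂ) * ((Equiv.Perm.sign τ : ℤ) : ℂ)) *
        ∏ i, (if k (σ⁻¹ i) = k' (τ⁻¹ i) then (L : ℂ) else 0) := by
    intro σ τ
    rw [← main σ τ, Finset.mul_sum]
    exact Finset.sum_congr rfl fun y _ => by ring
  simp_rw [hstep]
  by_cases hkk : k = k'
  · subst hkk
    rw [if_pos rfl]
    have hinner : ∀ σ : Equiv.Perm (Fin N),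
        ∑ τ : Equiv.Perm (Fin N),
          (((Equiv.Perm.sign σ : ℤ) : ℂ) * ((Equiv.Perm.sign τ : ℤ) : ℂ)) *
            ∏ i, (if k (σ⁻¹ i) = k (τ⁻¹ i) then (L : ℂ) else 0) = (L : ℂ) ^ N := by
      intro σ
      rw [Finset.sum_eq_single σ]
      · have hs : ((Equiv.Perm.sign σ : ℤ) : ℂ) * ((Equiv.Perm.sign σ : ℤ) : ℂ) = 1 := by
          rcases Int.units_eq_one_or (Equiv.Perm.sign σ) with h | h <;> simp [h]
        have hprod : (∏ i, if k (σ⁻¹ i) = k (σ⁻¹ i) then (L : ℂ) else 0) = (L : ℂ) ^ N := by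
          rw [Finset.prod_congr rfl fun i _ => if_pos rfl, Finset.prod_const,
            Finset.card_univ, Fintype.card_fin]
        rw [hs, hprod, one_mul]
      · intro τ _ hτ
        obtain ⟨i, hi⟩ : ∃ i, σ⁻¹ i ≠ τ⁻¹ i := by
          by_contra hno
          push_neg at hno
          exact hτ (inv_injective (Equiv.ext hno)).symm
        have hz : (∏ i, if k (σ⁻¹ i) = k (τ⁻¹ i) then (L : ℂ) else 0) = 0 :=
          Finset.prod_eq_zero (Finset.mem_univ i)
            (if_neg fun hcon => hi (hk.injective hcon))
        rw [hz, mul_zero]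
      · intro h
        exact absurd (Finset.mem_univ σ) h
    simp_rw [hinner]
    rw [Finset.sum_const, Finset.card_univ, Fintype.card_perm, Fintype.card_fin]
    simp [mul_comm]
  · rw [if_neg hkk]
    apply Finset.sum_eq_zero
    intro σ _
    apply Finset.sum_eq_zero
    intro τ _
    obtain ⟨i, hi⟩ : ∃ i, k (σ⁻¹ i) ≠ k' (τ⁻¹ i) := by
      by_contra hno
      push_neg at hno
      apply hkk
      have hfun : (k ∘ (σ⁻¹ : Equiv.Perm (Fin N))) = (k' ∘ (τ⁻¹ : Equiv.Perm (Fin N))) :=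
        funext hno
      have h1 : Set.range (k ∘ (σ⁻¹ : Equiv.Perm (Fin N))) = Set.range k :=
        (σ⁻¹ : Equiv.Perm (Fin N)).surjective.range_comp k
      have h2 : Set.range (k' ∘ (τ⁻¹ : Equiv.Perm (Fin N))) = Set.range k' :=
        (τ⁻¹ : Equiv.Perm (Fin N)).surjective.range_comp k'
      have hr : Set.range k = Set.range k' := by rw [← h1, hfun, h2]
      haveI : WellFoundedLT (Fin N) := Finite.to_wellFoundedLT
      exact (hk.range_inj hk').mp hr
    have hz : (∏ i, if k (σ⁻¹ i) = k' (τ⁻¹ i) then (L : ℂ) else 0) = 0 :=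
      Finset.prod_eq_zero (Finset.mem_univ i) (if_neg hi)
    rw [hz, mul_zero]

lemma exists_perm {L N : ℕ} (y : Fin N → Fin L) (hy : Function.Injective y) :
    ∃ (x : Fin N → Fin L) (π : Equiv.Perm (Fin N)), StrictMono x ∧ ∀ i, y i = x (π i) := by
  classical
  set s : Finset (Fin L) := Finset.image y Finset.univ with hs
  have hcard : s.card = N := by
    rw [hs, Finset.card_image_of_injective _ hy, Finset.card_univ, Fintype.card_fin]
  have hrange : Set.range y = (↑s : Set (Fin L)) := by
    rw [hs, Finset.coe_image, Finset.coe_univ, Set.image_univ]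
  refine ⟨s.orderEmbOfFin hcard,
    (Equiv.ofInjective y hy).trans ((Equiv.setCongr hrange).trans
      (s.orderIsoOfFin hcard).toEquiv.symm),
    (s.orderEmbOfFin hcard).strictMono, ?_⟩
  intro i
  rw [← Finset.coe_orderIsoOfFin_apply]
  simp only [Equiv.trans_apply]
  have h2 := Equiv.apply_symm_apply (s.orderIsoOfFin hcard).toEquiv
    ((Equiv.setCongr hrange) ((Equiv.ofInjective y hy) i))
  have h3 : ((Equiv.setCongr hrange) ((Equiv.ofInjective y hy) i)).1 = y i := rfl
  exact h3.symm.trans (congrArg Subtype.val h2.symm)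

end Stmt6Aux

/-- For `Δ = 0`, the Bethe vectors with components `u(ξ, x) = det(ξ_j^{x_i})`,
indexed by the strictly increasing `N`-tuples `k` in `{0,…,L-1}` (equivalently, the
`(L choose N)` `N`-element subsets), are linearly independent as functions on the set
`𝒳` of strictly increasing `N`-tuples. -/
theorem stmt6 (L N : ℕ) (hL : 0 < L) (hN : N ≤ L) :
    LinearIndependent ℂ (fun k : {k : Fin N → Fin L // StrictMono k} =>
      (fun x : {x : Fin N → Fin L // StrictMono x} =>
        Matrix.det (Matrix.of (fun i j : Fin N =>
          betheRoots0 L N k.1 j ^ ((x.1 i : ℕ)))))) := by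
  classical
  haveI : Fintype {x : Fin N → Fin L // StrictMono x} := Fintype.ofFinite _
  rw [Fintype.linearIndependent_iff]
  intro c hc p
  have hzero : ∀ x : {x : Fin N → Fin L // StrictMono x},
      ∑ k : {k : Fin N → Fin L // StrictMono k},
        c k * Matrix.det (Matrix.of fun i j : Fin N =>
          betheRoots0 L N k.1 j ^ ((x.1 i : ℕ))) = 0 := by
    intro x
    have := congrFun hc x
    simpa [Finset.sum_apply] using this
  have claimA : ∀ y : Fin N → Fin L,
      ∑ k : {k : Fin N → Fin L // StrictMono k},
        c k * Matrix.det (Matrix.of fun i j : Fin N =>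
          betheRoots0 L N k.1 j ^ ((y i : ℕ))) = 0 := by
    intro y
    by_cases hy : Function.Injective y
    · obtain ⟨x, π, hx, hyx⟩ := Stmt6Aux.exists_perm y hy
      have hdet : ∀ k : Fin N → Fin L,
          Matrix.det (Matrix.of fun i j : Fin N => betheRoots0 L N k j ^ ((y i : ℕ))) =
            ((Equiv.Perm.sign π : ℤ) : ℂ) *
              Matrix.det (Matrix.of fun i j : Fin N => betheRoots0 L N k j ^ ((x i : ℕ))) := by
        intro k
        have h1 : (Matrix.of fun i j : Fin N => betheRoots0 L N k j ^ ((y i : ℕ))) =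
            (Matrix.of fun i j : Fin N =>
              betheRoots0 L N k j ^ ((x i : ℕ))).submatrix π id := by
          ext i j
          simp [Matrix.submatrix, hyx i]
        rw [h1, Matrix.det_permute]
      simp_rw [hdet]
      have hpull : ∑ kk : {k : Fin N → Fin L // StrictMono k},
          c kk * (((Equiv.Perm.sign π : ℤ) : ℂ) * Matrix.det (Matrix.of fun i j : Fin N =>
            betheRoots0 L N kk.1 j ^ ((x i : ℕ)))) =
          ((Equiv.Perm.sign π : ℤ) : ℂ) * ∑ kk : {k : Fin N → Fin L // StrictMono k},
            c kk * Matrix.det (Matrix.of fun i j : Fin N =>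
              betheRoots0 L N kk.1 j ^ ((x i : ℕ))) := by
        rw [Finset.mul_sum]
        exact Finset.sum_congr rfl fun kk _ => by ring
      rw [hpull, hzero ⟨x, hx⟩, mul_zero]
    · apply Finset.sum_eq_zero
      intro k _
      rw [Function.not_injective_iff] at hy
      obtain ⟨a, b, hab, hne⟩ := hy
      have hdz : Matrix.det (Matrix.of fun i j : Fin N =>
          betheRoots0 L N k.1 j ^ ((y i : ℕ))) = 0 := by
        apply Matrix.det_zero_of_row_eq hne
        funext j
        simp [hab]
      rw [hdz, mul_zero]
  have key : ∑ k : {k : Fin N → Fin L // StrictMono k},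
      c k * ∑ y : Fin N → Fin L,
        (Matrix.det (Matrix.of fun i j : Fin N => betheRoots0 L N k.1 j ^ ((y i : ℕ)))) *
          (Matrix.det (Matrix.of fun i j : Fin N =>
            (betheRoots0 L N p.1 j ^ ((y i : ℕ)))⁻¹)) = 0 := by
    simp_rw [Finset.mul_sum]
    rw [Finset.sum_comm]
    apply Finset.sum_eq_zero
    intro y _
    simp_rw [← mul_assoc, ← Finset.sum_mul]
    rw [claimA y, zero_mul]
  have hbs : ∀ k : {k : Fin N → Fin L // StrictMono k},
      ∑ y : Fin N → Fin L,
        (Matrix.det (Matrix.of fun i j : Fin N => betheRoots0 L N k.1 j ^ ((y i : ℕ)))) *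
          (Matrix.det (Matrix.of fun i j : Fin N =>
            (betheRoots0 L N p.1 j ^ ((y i : ℕ)))⁻¹)) =
        if k = p then ((N.factorial : ℕ) : ℂ) * (L : ℂ) ^ N else 0 := by
    intro k
    rw [Stmt6Aux.bigsum L N hL k.2 p.2]
    simp [Subtype.ext_iff]
  simp_rw [hbs, mul_ite, mul_zero, Finset.sum_ite_eq' Finset.univ p, Finset.mem_univ,
    if_true] at key
  have hnz : ((N.factorial : ℕ) : ℂ) * (L : ℂ) ^ N ≠ 0 :=
    mul_ne_zero (Nat.cast_ne_zero.2 N.factorial_ne_zero)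
      (pow_ne_zero _ (Nat.cast_ne_zero.2 hL.ne'))
  exact (mul_eq_zero.mp key).resolve_right hnz
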